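/- Let L0 be a set of implications valid in a formal context K with finite attribute set M, and let L_{K,L0} = {P ⟹ P'' : P an L0-pseudo-intent of K}. Then every implication valid in K follows semantically from L_{K,L0} ∪ L0. -/
import Mathlib


open Classical in
/-- The double derivation `A ↦ A''` in a formal context `(G, M, I)` with
finite attribute set, on finite attribute sets. -/
noncomputable def doublePrime {G M : Type*} [Fintype M] (I : G → M → Prop)
    (A : Finset M) : Finset M :=
  Finset.univ.filter fun m => ∀ g : G, (∀ a ∈ A, I g a) → I g m

/-- `L0`-pseudo-intents of a formal context with double-derivation operator
`cl`. -/
def IsPseudoIntent {M : Type*} [DecidableEq M] (cl : Finset M → Finset M)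
    (L0 : Set (Finset M × Finset M)) : Finset M → Prop
  | P =>
    (∀ p ∈ L0, p.1 ⊆ P → p.2 ⊆ P) ∧ P ≠ cl P ∧
      ∀ Q, Q ⊂ P → IsPseudoIntent cl L0 Q → cl Q ⊆ P
termination_by P => P.card
decreasing_by exact Finset.card_lt_card (by assumption)

lemma IsPseudoIntent_iff {M : Type*} [DecidableEq M] (cl : Finset M → Finset M)
    (L0 : Set (Finset M × Finset M)) (P : Finset M) :
    IsPseudoIntent cl L0 P ↔
      (∀ p ∈ L0, p.1 ⊆ P → p.2 ⊆ P) ∧ P ≠ cl P ∧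
        ∀ Q, Q ⊂ P → IsPseudoIntent cl L0 Q → cl Q ⊆ P := by
  rw [IsPseudoIntent]

lemma subset_doublePrime {G M : Type*} [Fintype M] (I : G → M → Prop)
    (A : Finset M) : A ⊆ doublePrime I A := by
  intro m hm
  simp only [doublePrime, Finset.mem_filter, Finset.mem_univ, true_and]
  exact fun g hg => hg m hm

lemma doublePrime_mono {G M : Type*} [Fintype M] (I : G → M → Prop)
    {A B : Finset M} (h : A ⊆ B) : doublePrime I A ⊆ doublePrime I B := by
  intro m hm
  simp only [doublePrime, Finset.mem_filter, Finset.mem_univ, true_and] at hm ⊢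
  exact fun g hg => hm g (fun a ha => hg a (h ha))

lemma mem_doublePrime {G M : Type*} [Fintype M] (I : G → M → Prop)
    {A : Finset M} {m : M} :
    m ∈ doublePrime I A ↔ ∀ g : G, (∀ a ∈ A, I g a) → I g m := by
  simp [doublePrime]

lemma doublePrime_idem {G M : Type*} [Fintype M] (I : G → M → Prop)
    (A : Finset M) : doublePrime I (doublePrime I A) = doublePrime I A := by
  apply Finset.Subset.antisymm
  · intro m hm
    rw [mem_doublePrime] at hm ⊢
    intro g hg
    exact hm g (fun a ha => (mem_doublePrime I).mp ha g hg)
  · exact subset_doublePrime I _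

lemma doublePrime_eq_of_between {G M : Type*} [Fintype M] (I : G → M → Prop)
    {A B : Finset M} (h1 : A ⊆ B) (h2 : B ⊆ doublePrime I A) :
    doublePrime I B = doublePrime I A := by
  apply Finset.Subset.antisymm
  · have := doublePrime_mono I h2
    rwa [doublePrime_idem] at this
  · exact doublePrime_mono I h1

/-- if all implications of `L0` are valid in `K`, then every
implication valid in `K` follows semantically from the relative canonical base
`{P ⟹ P'' : P an L0-pseudo-intent}` together with `L0`: every `T ⊆ M`
respecting all those implications respects every valid implication of `K`. -/
theorem stmt15 {G M : Type*} [Fintype M] [DecidableEq M] (I : G → M → Prop)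
    (L0 : Set (Finset M × Finset M))
    (hL0 : ∀ p ∈ L0, p.2 ⊆ doublePrime I p.1) :
    ∀ A B : Finset M, B ⊆ doublePrime I A →
      ∀ T : Finset M,
        (∀ P, IsPseudoIntent (doublePrime I) L0 P →
          P ⊆ T → doublePrime I P ⊆ T) →
        (∀ p ∈ L0, p.1 ⊆ T → p.2 ⊆ T) →
        A ⊆ T → B ⊆ T := by
  intro A B hB T hT hT0 hA
  -- key claim: for every A ⊆ T, doublePrime I A ⊆ T
  suffices key : ∀ n : ℕ, ∀ A : Finset M, (Finset.univ \ A).card ≤ n →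
      A ⊆ T → doublePrime I A ⊆ T by
    exact hB.trans (key (Finset.univ \ A).card A le_rfl hA)
  intro n
  induction n with
  | zero =>
    intro A hn hAT
    have hAuniv : A = Finset.univ := by
      have : Finset.univ \ A = ∅ := Finset.card_eq_zero.mp (Nat.le_zero.mp hn)
      have := Finset.sdiff_eq_empty_iff_subset.mp this
      exact Finset.Subset.antisymm (Finset.subset_univ A) this
    intro m hm
    exact hAT (hAuniv ▸ Finset.mem_univ m)
  | succ n ih =>
    intro A hn hAT
    by_cases heq : A = doublePrime I A
    · exact heq ▸ hAT
    by_cases hpi : IsPseudoIntent (doublePrime I) L0 A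
    · exact hT A hpi hAT
    · -- A is not a pseudo-intent; one of the first/third conditions fails
      rw [IsPseudoIntent_iff] at hpi
      by_cases h1 : ∀ p ∈ L0, p.1 ⊆ A → p.2 ⊆ A
      case neg =>
        -- some p ∈ L0 with p.1 ⊆ A, p.2 ⊄ A
        push_neg at h1
        obtain ⟨p, hp, hp1, hp2⟩ := h1
        set A1 := A ∪ p.2 with hA1def
        have hAA1 : A ⊆ A1 := Finset.subset_union_left
        have hA1T : A1 ⊆ T := Finset.union_subset hAT (hT0 p hp (hp1.trans hAT))
        have hA1dp : A1 ⊆ doublePrime I A :=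
          Finset.union_subset (subset_doublePrime I A)
            ((hL0 p hp).trans (doublePrime_mono I hp1))
        have hne : A ≠ A1 := by
          intro h
          exact hp2 (fun x hx => h ▸ (Finset.mem_union_right A hx))
        have hss : A ⊂ A1 := hAA1.ssubset_of_ne hne
        have hcard : (Finset.univ \ A1).card ≤ n := by
          have h1' := Finset.card_sdiff_of_subset (Finset.subset_univ A)
          have h2' := Finset.card_sdiff_of_subset (Finset.subset_univ A1)
          have h3' := Finset.card_lt_card hss
          have h4' := Finset.card_le_univ A1
          omega
        have := ih A1 hcard hA1T
        rwa [doublePrime_eq_of_between I hAA1 hA1dp] at this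
      case pos =>
          have h3 : ∃ Q, Q ⊂ A ∧ IsPseudoIntent (doublePrime I) L0 Q ∧
              ¬ doublePrime I Q ⊆ A := by
            by_contra h3
            push_neg at h3
            exact hpi ⟨h1, heq, fun Q hQ hQp => h3 Q hQ hQp⟩
          obtain ⟨Q, hQA, hQpi, hQ2⟩ := h3
          set A1 := A ∪ doublePrime I Q with hA1def
          have hAA1 : A ⊆ A1 := Finset.subset_union_left
          have hQT : doublePrime I Q ⊆ T := hT Q hQpi (hQA.subset.trans hAT)
          have hA1T : A1 ⊆ T := Finset.union_subset hAT hQT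
          have hA1dp : A1 ⊆ doublePrime I A :=
            Finset.union_subset (subset_doublePrime I A)
              (doublePrime_mono I hQA.subset)
          have hne : A ≠ A1 := by
            intro h
            exact hQ2 (fun x hx => h ▸ (Finset.mem_union_right A hx))
          have hss : A ⊂ A1 := hAA1.ssubset_of_ne hne
          have hcard : (Finset.univ \ A1).card ≤ n := by
            have h1' := Finset.card_sdiff_of_subset (Finset.subset_univ A)
            have h2' := Finset.card_sdiff_of_subset (Finset.subset_univ A1)
            have h3' := Finset.card_lt_card hss
            have h4' := Finset.card_le_univ A1
            omega
          have := ih A1 hcard hA1T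
          rwa [doublePrime_eq_of_between I hAA1 hA1dp] at this
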